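/- Let ξ ∈ 𝔽_q((T^{-1})) be irrational and let α ∈ 𝔽_q((T^{-1})) not belong to 𝔽_q[T] + 𝔽_q[T]·ξ. Then there exist infinitely many polynomials Q ∈ 𝔽_q[T] such that ‖Qξ − α‖ ≤ 1/(q²·|Q|). -/

import Mathlib

open Polynomial Filter
open scoped Classical ENNReal

noncomputable section

variable (Fq : Type) [Field Fq] [Fintype Fq]

/-- The element `T` inside the Laurent-series field `𝔽_q((T⁻¹))`, which we realize
as the field of Hahn/Laurent series in the variable `T⁻¹`. -/
def Tel : LaurentSeries Fq := HahnSeries.single (-1 : ℤ) 1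

/-- The inverse variable `T⁻¹` itself. -/
def TinvEl : LaurentSeries Fq := HahnSeries.single (1 : ℤ) 1

/-- The embedding of the polynomial ring `𝔽_q[T]` into `𝔽_q((T⁻¹))`,
sending `T` to `Tel`. -/
def polyToL (P : Polynomial Fq) : LaurentSeries Fq :=
  Polynomial.eval₂ HahnSeries.C (Tel Fq) P

/-- The absolute value `|x| = q ^ (deg x)` on `𝔽_q((T⁻¹))`, with `|0| = 0`.
Here the degree of `x ≠ 0` is minus the order of `x` as a series in `T⁻¹`. -/
def labs (x : LaurentSeries Fq) : ℝ :=
  if x = 0 then 0 else (Fintype.card Fq : ℝ) ^ (-x.order)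

/-- `‖x‖`: the distance from `x` to the nearest polynomial. -/
def lnorm (x : LaurentSeries Fq) : ℝ :=
  ⨅ P : Polynomial Fq, labs Fq (x - polyToL Fq P)

/-- `x ∈ 𝔽_q(T)`, i.e. `x` is rational. -/
def IsRat (x : LaurentSeries Fq) : Prop :=
  ∃ P Q : Polynomial Fq, Q ≠ 0 ∧ polyToL Fq Q * x = polyToL Fq P

/-!
Call `(Q, P)` an approximation of level `s` if `|Q| ≤ q^(s-2)` and `|α - P - Qξ| ≤ q^(-s)`; for
`Q ≠ 0` this gives `‖Qξ - α‖ ≤ 1 / (q² |Q|)`. The level can be raised indefinitely. Dirichlet's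
principle (here: `n` linear equations in `n + 1` unknowns) gives `Q₀ ≠ 0` with `|Q₀| ≤ q^(s-1)`
and `θ = Q₀ξ - P₀` with `|θ| ≤ q^(-s)`, and `θ ≠ 0` as `ξ` is irrational. Write `|θ| = q^(-m)` and
let `A` be the polynomial part of `r / θ`, where `r = α - P - Qξ`; then `(Q + AQ₀, P - AP₀)` has level
`m + 1`, because `|A| ≤ q^(m-s)` and `|r - Aθ| < |θ|`. If there were only finitely many good `Q`,
then `‖Qξ - α‖`, which is positive for each `Q` since `α ∉ 𝔽_q[T] + 𝔽_q[T] ξ`, would be bounded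
below on them, while the approximations of growing level make it arbitrarily small.
-/

section OrderTop

variable {K : Type} [Field K]

@[simp] lemma polyToL_add (P Q : K[X]) : polyToL K (P + Q) = polyToL K P + polyToL K Q :=
  eval₂_add _ _

@[simp] lemma polyToL_sub (P Q : K[X]) : polyToL K (P - Q) = polyToL K P - polyToL K Q :=
  eval₂_sub _

@[simp] lemma polyToL_neg (P : K[X]) : polyToL K (-P) = -polyToL K P := eval₂_neg _

@[simp] lemma polyToL_mul (P Q : K[X]) : polyToL K (P * Q) = polyToL K P * polyToL K Q :=
  eval₂_mul _ _

lemma polyToL_smul (c : K) (P : K[X]) :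
    polyToL K (c • P) = HahnSeries.C c * polyToL K P :=
  eval₂_smul _ _ _

lemma polyToL_monomial (n : ℕ) (a : K) :
    polyToL K (monomial n a) = HahnSeries.single (-(n : ℤ)) a := by
  rw [polyToL, eval₂_monomial, Tel, HahnSeries.single_pow, HahnSeries.C_apply,
    HahnSeries.single_mul_single]
  simp

lemma coeff_polyToL_neg_natCast (P : K[X]) (n : ℕ) :
    (polyToL K P).coeff (-(n : ℤ)) = P.coeff n := by
  induction P using Polynomial.induction_on' with
  | add P Q hP hQ => simp [hP, hQ]
  | monomial k a =>
    rw [polyToL_monomial, HahnSeries.coeff_single, coeff_monomial]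
    simp [eq_comm]

lemma coeff_polyToL_of_pos (P : K[X]) {i : ℤ} (hi : 0 < i) : (polyToL K P).coeff i = 0 := by
  induction P using Polynomial.induction_on' with
  | add P Q hP hQ => simp [hP, hQ]
  | monomial k a =>
    rw [polyToL_monomial, HahnSeries.coeff_single_of_ne]
    omega

lemma coeff_polyToL_of_nonpos (P : K[X]) {i : ℤ} (hi : i ≤ 0) :
    (polyToL K P).coeff i = P.coeff (-i).toNat := by
  rw [← coeff_polyToL_neg_natCast]
  congr
  omega

lemma orderTop_polyToL {P : K[X]} (hP : P ≠ 0) :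
    (polyToL K P).orderTop = ((-P.natDegree : ℤ) : WithTop ℤ) := by
  refine HahnSeries.orderTop_eq_of_le ?_ fun i hi => ?_
  · rw [HahnSeries.mem_support, coeff_polyToL_neg_natCast]
    exact leadingCoeff_ne_zero.2 hP
  · rw [HahnSeries.mem_support] at hi
    obtain ⟨n, rfl⟩ : ∃ n : ℕ, i = -(n : ℤ) := by
      by_contra! h
      exact hi (coeff_polyToL_of_pos P (by specialize h (-i).toNat; omega))
    rw [coeff_polyToL_neg_natCast] at hi
    have := le_natDegree_of_ne_zero hi
    omega

lemma polyToL_ne_zero {P : K[X]} (hP : P ≠ 0) : polyToL K P ≠ 0 := by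
  rw [← HahnSeries.orderTop_ne_top, orderTop_polyToL hP]
  exact WithTop.coe_ne_top

lemma exists_one_le_orderTop_sub_polyToL (x : LaurentSeries K) :
    ∃ P : K[X], 1 ≤ (x - polyToL K P).orderTop := by
  set N := (-x.order).toNat
  refine ⟨∑ n ∈ Finset.range (N + 1), monomial n (x.coeff (-n)), ?_⟩
  refine HahnSeries.le_orderTop_iff_forall.2 fun i hi => ?_
  have hi : i ≤ 0 := by
    have : i < 1 := by exact_mod_cast hi
    omega
  simp only [HahnSeries.coeff_sub, coeff_polyToL_of_nonpos _ hi, finsetSum_coeff, coeff_monomial,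
    Finset.sum_ite_eq', Finset.mem_range]
  split_ifs with h
  · rw [Int.toNat_of_nonneg (by omega), neg_neg, sub_self]
  · rw [sub_zero, HahnSeries.coeff_eq_zero_of_lt_order (by omega)]

lemma eq_zero_of_one_le_orderTop_polyToL {P : K[X]} (h : 1 ≤ (polyToL K P).orderTop) : P = 0 := by
  by_contra hP
  rw [orderTop_polyToL hP] at h
  norm_cast at h
  omega

lemma eq_of_one_le_orderTop_sub_polyToL {x : LaurentSeries K} {P₁ P₂ : K[X]}
    (h₁ : 1 ≤ (x - polyToL K P₁).orderTop) (h₂ : 1 ≤ (x - polyToL K P₂).orderTop) : P₁ = P₂ := by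
  refine sub_eq_zero.1 (eq_zero_of_one_le_orderTop_polyToL ?_)
  have : polyToL K (P₁ - P₂) = (x - polyToL K P₂) - (x - polyToL K P₁) := by simp
  rw [this]
  exact (le_min h₂ h₁).trans HahnSeries.min_orderTop_le_orderTop_sub

/-- The vanishing of the coefficients of `Qξ` at `1, …, n` is a system of `n` linear equations in
the `n + 1` coefficients of `Q`. -/
lemma exists_natDegree_le_and_orderTop_mul_sub_ge (ξ : LaurentSeries K) (n : ℕ) :
    ∃ Q P : K[X], Q ≠ 0 ∧ Q.natDegree ≤ n ∧
      ((n + 1 : ℤ) : WithTop ℤ) ≤ (polyToL K Q * ξ - polyToL K P).orderTop := by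
  let M : degreeLT K (n + 1) →ₗ[K] Fin n → K :=
    { toFun := fun Q j => (polyToL K Q * ξ).coeff (j + 1)
      map_add' := by intros; ext; simp [add_mul]
      map_smul' := fun c Q => by
        ext j
        rw [Submodule.coe_smul, polyToL_smul, mul_assoc, HahnSeries.C_mul_eq_smul,
          HahnSeries.coeff_smul]
        rfl }
  have : FiniteDimensional K (degreeLT K (n + 1)) :=
    (degreeLTEquiv K (n + 1)).symm.finiteDimensional
  have hdim : Module.finrank K (Fin n → K) < Module.finrank K (degreeLT K (n + 1)) := by
    simp [(degreeLTEquiv K (n + 1)).finrank_eq]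
  obtain ⟨⟨Q, hQdeg⟩, hQker, hQ⟩ :=
    (Submodule.ne_bot_iff _).1 (LinearMap.ker_ne_bot_of_finrank_lt hdim)
  obtain ⟨P, hP⟩ := exists_one_le_orderTop_sub_polyToL (polyToL K Q * ξ)
  replace hQ : Q ≠ 0 := by simpa using hQ
  refine ⟨Q, P, hQ, ?_, HahnSeries.le_orderTop_iff_forall.2 fun i hi => ?_⟩
  · have := (natDegree_lt_iff_degree_lt hQ).2 (mem_degreeLT.1 hQdeg)
    omega
  · rcases le_or_gt i 0 with hi0 | hi0
    · exact HahnSeries.le_orderTop_iff_forall.1 hP i (by exact_mod_cast Int.lt_add_one_iff.2 hi0)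
    · have hi : i < n + 1 := by exact_mod_cast hi
      have h := congrFun (LinearMap.mem_ker (f := M).1 hQker) ⟨(i - 1).toNat, by omega⟩
      have : (polyToL K Q * ξ).coeff (((i - 1).toNat : ℤ) + 1) = 0 := h
      rw [HahnSeries.coeff_sub, coeff_polyToL_of_pos P hi0, sub_zero, ← this]
      congr
      omega

lemma exists_orderTop_sub_polyToL_mul_ge {θ r : LaurentSeries K} (hθ : θ ≠ 0) {a : ℤ}
    (ha : a ≤ θ.order) (hr : (a : WithTop ℤ) ≤ r.orderTop) :
    ∃ A : K[X], ((a - θ.order : ℤ) : WithTop ℤ) ≤ (polyToL K A).orderTop ∧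
      ((θ.order + 1 : ℤ) : WithTop ℤ) ≤ (r - polyToL K A * θ).orderTop := by
  -- `A` is the polynomial part of `r / θ`.
  obtain ⟨A, hA⟩ := exists_one_le_orderTop_sub_polyToL (r / θ)
  have hθ' : θ.orderTop = θ.order := (HahnSeries.order_eq_orderTop_of_ne_zero hθ).symm
  have hquot : ((a - θ.order : ℤ) : WithTop ℤ) ≤ (r / θ).orderTop := by
    have h : (r / θ).orderTop + θ.order = r.orderTop := by
      rw [← hθ', ← HahnSeries.orderTop_mul, div_mul_cancel₀ _ hθ]
    rw [← h] at hr
    generalize (r / θ).orderTop = x at hr ⊢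
    induction x using WithTop.recTopCoe with
    | top => exact le_top
    | coe x =>
      norm_cast at hr ⊢
      omega
  refine ⟨A, ?_, ?_⟩
  · rw [show polyToL K A = r / θ - (r / θ - polyToL K A) by ring]
    refine le_trans (le_min hquot (le_trans ?_ hA)) HahnSeries.min_orderTop_le_orderTop_sub
    exact_mod_cast (by omega : a - θ.order ≤ 1)
  · rw [show r - polyToL K A * θ = θ * (r / θ - polyToL K A) by field_simp, HahnSeries.orderTop_mul,
      hθ', WithTop.coe_add]
    exact add_le_add le_rfl (by exact_mod_cast hA)

/-- An approximation of level `s`; `n ≤ x.orderTop` expresses `|x| ≤ q ^ (-n)`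
(`labs_le_zpow_iff`). -/
def IsInhomApprox (ξ α : LaurentSeries K) (s : ℤ) (Q P : K[X]) : Prop :=
  ((2 - s : ℤ) : WithTop ℤ) ≤ (polyToL K Q).orderTop ∧
    (s : WithTop ℤ) ≤ (α - polyToL K P - polyToL K Q * ξ).orderTop

lemma IsInhomApprox.exists_gt {ξ α : LaurentSeries K} (hξ : ¬ IsRat K ξ) {s : ℤ} (hs : 1 ≤ s)
    {Q P : K[X]} (h : IsInhomApprox ξ α s Q P) :
    ∃ s' > s, ∃ Q' P' : K[X], IsInhomApprox ξ α s' Q' P' := by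
  obtain ⟨n, rfl⟩ : ∃ n : ℕ, s = n + 1 := ⟨(s - 1).toNat, by omega⟩
  obtain ⟨Q₀, P₀, hQ₀, hdeg, hθ⟩ := exists_natDegree_le_and_orderTop_mul_sub_ge ξ n
  set θ := polyToL K Q₀ * ξ - polyToL K P₀
  have hθ0 : θ ≠ 0 := fun h => hξ ⟨P₀, Q₀, hQ₀, sub_eq_zero.1 h⟩
  have hm : (n + 1 : ℤ) ≤ θ.order := by
    rw [← HahnSeries.order_eq_orderTop_of_ne_zero hθ0] at hθ
    exact_mod_cast hθ
  obtain ⟨A, hA, hrem⟩ := exists_orderTop_sub_polyToL_mul_ge hθ0 hm h.2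
  have hQ₀' : ((-n : ℤ) : WithTop ℤ) ≤ (polyToL K Q₀).orderTop := by
    rw [orderTop_polyToL hQ₀]
    exact_mod_cast (by omega : -(n : ℤ) ≤ -(Q₀.natDegree : ℤ))
  refine ⟨θ.order + 1, by omega, Q + A * Q₀, P - A * P₀, ?_, ?_⟩
  · rw [polyToL_add, polyToL_mul]
    refine le_trans (le_min (le_trans ?_ h.1) ?_) HahnSeries.min_orderTop_le_orderTop_add
    · exact_mod_cast (by omega : 2 - (θ.order + 1) ≤ 2 - (n + 1 : ℤ))
    · rw [HahnSeries.orderTop_mul]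
      refine le_trans ?_ (add_le_add hA hQ₀')
      rw [← WithTop.coe_add]
      exact_mod_cast (by omega : 2 - (θ.order + 1) ≤ n + 1 - θ.order + -n)
  · convert hrem using 2
    simp only [polyToL_add, polyToL_sub, polyToL_mul, θ]
    ring

lemma exists_gt_isInhomApprox {ξ : LaurentSeries K} (hξ : ¬ IsRat K ξ) (α : LaurentSeries K)
    (n : ℕ) : ∃ s : ℤ, n < s ∧ ∃ Q P : K[X], IsInhomApprox ξ α s Q P := by
  induction n with
  | zero =>
    obtain ⟨P, hP⟩ := exists_one_le_orderTop_sub_polyToL α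
    refine ⟨1, one_pos, 0, P, ?_, ?_⟩
    · simp [polyToL]
    · simpa [polyToL] using hP
  | succ n ih =>
    obtain ⟨s, hns, Q, P, h⟩ := ih
    obtain ⟨s', hss', Q', P', h'⟩ := h.exists_gt hξ (by omega)
    exact ⟨s', by omega, Q', P', h'⟩

end OrderTop

section AbsoluteValue

local notation "q" => (Fintype.card Fq : ℝ)

lemma one_lt_card_real : (1 : ℝ) < q := by exact_mod_cast Fintype.one_lt_card

lemma card_pos_real : (0 : ℝ) < q := zero_lt_one.trans (one_lt_card_real Fq)

variable {Fq}

lemma labs_le_zpow_iff {x : LaurentSeries Fq} {n : ℤ} :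
    labs Fq x ≤ q ^ (-n) ↔ (n : WithTop ℤ) ≤ x.orderTop := by
  unfold labs
  split_ifs with hx
  · simp [hx, (zpow_pos (card_pos_real Fq) _).le]
  · rw [← HahnSeries.order_eq_orderTop_of_ne_zero hx, WithTop.coe_le_coe,
      zpow_le_zpow_iff_right₀ (one_lt_card_real Fq), neg_le_neg_iff]

lemma labs_pos {x : LaurentSeries Fq} (hx : x ≠ 0) : 0 < labs Fq x := by
  unfold labs
  rw [if_neg hx]
  exact zpow_pos (card_pos_real Fq) _

lemma labs_nonneg (x : LaurentSeries Fq) : 0 ≤ labs Fq x := by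
  rcases eq_or_ne x 0 with rfl | hx
  · simp [labs]
  · exact (labs_pos hx).le

lemma labs_neg (x : LaurentSeries Fq) : labs Fq (-x) = labs Fq x := by
  simp only [labs, neg_eq_zero, HahnSeries.order_neg]

lemma lnorm_le_labs_sub (x : LaurentSeries Fq) (P : Fq[X]) :
    lnorm Fq x ≤ labs Fq (x - polyToL Fq P) :=
  ciInf_le ⟨0, by rintro _ ⟨P, rfl⟩; exact labs_nonneg _⟩ P

lemma lnorm_pos {x : LaurentSeries Fq} (hx : ∀ P : Fq[X], x ≠ polyToL Fq P) : 0 < lnorm Fq x := by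
  obtain ⟨P₀, hP₀⟩ := exists_one_le_orderTop_sub_polyToL x
  have hδ : 0 < min (q ^ (-1 : ℤ)) (labs Fq (x - polyToL Fq P₀)) :=
    lt_min (zpow_pos (card_pos_real Fq) _) (labs_pos (sub_ne_zero.2 (hx P₀)))
  refine hδ.trans_le (le_ciInf fun P => ?_)
  by_cases h : 1 ≤ (x - polyToL Fq P).orderTop
  · rw [eq_of_one_le_orderTop_sub_polyToL h hP₀]
    exact min_le_right _ _
  · rw [← WithTop.coe_one, ← labs_le_zpow_iff, not_le] at h
    exact (min_le_left _ _).trans h.le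

lemma IsInhomApprox.lnorm_le {ξ α : LaurentSeries Fq} {s : ℤ} {Q P : Fq[X]}
    (h : IsInhomApprox ξ α s Q P) : lnorm Fq (polyToL Fq Q * ξ - α) ≤ q ^ (-s) := by
  refine (lnorm_le_labs_sub _ (-P)).trans ?_
  rw [show polyToL Fq Q * ξ - α - polyToL Fq (-P) = -(α - polyToL Fq P - polyToL Fq Q * ξ) by
    simp; ring, labs_neg, labs_le_zpow_iff]
  exact h.2

lemma IsInhomApprox.lnorm_le_one_div {ξ α : LaurentSeries Fq} {s : ℤ} {Q P : Fq[X]}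
    (h : IsInhomApprox ξ α s Q P) (hQ : Q ≠ 0) :
    lnorm Fq (polyToL Fq Q * ξ - α) ≤ 1 / (q ^ 2 * labs Fq (polyToL Fq Q)) := by
  have hq := card_pos_real Fq
  have hQs : labs Fq (polyToL Fq Q) ≤ q ^ (s - 2) := by
    rw [← neg_sub, labs_le_zpow_iff]
    exact h.1
  refine h.lnorm_le.trans ?_
  rw [zpow_neg, inv_eq_one_div]
  refine one_div_le_one_div_of_le (mul_pos (pow_pos hq 2) (labs_pos (polyToL_ne_zero hQ))) ?_
  calc q ^ 2 * labs Fq (polyToL Fq Q) ≤ q ^ 2 * q ^ (s - 2) := by gcongr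
    _ = q ^ s := by rw [← zpow_natCast, ← zpow_add₀ hq.ne']; ring_nf

end AbsoluteValue

/-- **Inhomogeneous Minkowski theorem over `𝔽_q((T⁻¹))`.**
If `ξ` is irrational and `α ∉ 𝔽_q[T] + 𝔽_q[T]·ξ`, then there exist infinitely many
polynomials `Q ∈ 𝔽_q[T]` with `‖Qξ − α‖ ≤ 1 / (q² |Q|)`. -/
theorem stmt0 (ξ α : LaurentSeries Fq) (hξ : ¬ IsRat Fq ξ)
    (hα : ∀ P Q : Polynomial Fq, α ≠ polyToL Fq P + polyToL Fq Q * ξ) :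
    {Q : Polynomial Fq |
      lnorm Fq (polyToL Fq Q * ξ - α) ≤
        1 / ((Fintype.card Fq : ℝ) ^ 2 * labs Fq (polyToL Fq Q))}.Infinite := by
  intro hS
  obtain ⟨Q₀, -, hQ₀⟩ := Set.exists_min_image _ (fun Q => lnorm Fq (polyToL Fq Q * ξ - α))
    (hS.insert 0) (Set.insert_nonempty _ _)
  have hε : 0 < lnorm Fq (polyToL Fq Q₀ * ξ - α) :=
    lnorm_pos fun P h => hα (-P) Q₀ (by rw [polyToL_neg]; linear_combination -h)
  obtain ⟨n, hn⟩ := exists_pow_lt_of_lt_one hε (inv_lt_one_of_one_lt₀ (one_lt_card_real Fq))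
  obtain ⟨s, hns, Q, P, h⟩ := exists_gt_isInhomApprox hξ α n
  have hmin := hQ₀ Q <| by
    rcases eq_or_ne Q 0 with rfl | hQ
    exacts [Set.mem_insert _ _, Set.mem_insert_of_mem _ (h.lnorm_le_one_div hQ)]
  have hs : (Fintype.card Fq : ℝ) ^ (-s) ≤ (Fintype.card Fq : ℝ)⁻¹ ^ n := by
    rw [inv_pow, ← zpow_natCast, ← zpow_neg]
    exact zpow_le_zpow_right₀ (one_lt_card_real Fq).le (by omega)
  linarith [h.lnorm_le]
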